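/- (First variation inequality) Let q, p, x be points in a metric space with a geodesic γ from q to x parametrized by arc length, and suppose the angle α between [qp] and [qx] at q is defined. Then dist(p, γ(t)) ≤ dist(q, p) − t·cos α + o(t) as t → 0+. -/
import Mathlib


open Set Filter Topology

/-- The Euclidean comparison angle for side lengths `a`, `b` adjacent to the vertex and
opposite side `c`. -/
noncomputable def modAngle (a b c : ℝ) : ℝ :=
  Real.arccos ((a ^ 2 + b ^ 2 - c ^ 2) / (2 * a * b))

/-- `γ` is a unit-speed geodesic from `a` to `b`. -/
def IsGeodesic {X : Type*} [MetricSpace X] (γ : ℝ → X) (a b : X) : Prop :=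
  γ 0 = a ∧ γ (dist a b) = b ∧
    ∀ s ∈ Icc (0:ℝ) (dist a b), ∀ t ∈ Icc (0:ℝ) (dist a b),
      dist (γ s) (γ t) = |s - t|

/-- First variation inequality: if the angle `α` of the hinge `([qp],[qx])` is defined,
then `dist p (γ t) ≤ dist q p − t·cos α + o(t)` as `t → 0+`, where `γ` is the unit-speed
geodesic from `q` to `x`. -/

private lemma auxBounds (s t c : ℝ) (hs : 0 < s) (ht : 0 < t)
    (h1 : s - t ≤ c) (h2 : t - s ≤ c) (h3 : c ≤ s + t) (hc0 : 0 ≤ c) :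
    -1 ≤ (s^2 + t^2 - c^2) / (2*s*t) ∧ (s^2 + t^2 - c^2) / (2*s*t) ≤ 1 := by
  have hst2 : 0 < 2 * s * t := by positivity
  constructor
  · rw [le_div_iff₀ hst2]
    nlinarith [mul_le_mul h3 h3 hc0 (by positivity : (0:ℝ) ≤ s + t)]
  · rw [div_le_iff₀ hst2]
    nlinarith [mul_nonneg (by linarith : (0:ℝ) ≤ c - (s - t)) (by linarith : (0:ℝ) ≤ c + (s - t))]

private lemma auxKey (s t c R : ℝ) (ht0 : 0 < t) (hts : t < s) (hR1 : R ≤ 1)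
    (hc0 : 0 ≤ c) (hc2 : c^2 = s^2 + t^2 - 2*s*t*R) :
    c ≤ s - t * R + t^2 / (2*(s-t)) := by
  have hst0 : 0 < s - t := by linarith
  have hA : 0 < s - t * R := by nlinarith
  set u : ℝ := t^2 / (2*(s-t)) with hudef
  have hu : 0 ≤ u := by positivity
  have hu2 : 2 * (s-t) * u = t^2 := by
    rw [hudef]; field_simp
  have h2Au : t^2 ≤ 2 * (s - t*R) * u := by
    nlinarith [mul_nonneg hu (mul_nonneg ht0.le (by linarith : (0:ℝ) ≤ 1 - R))]
  have hsq : c^2 ≤ (s - t*R + u)^2 := by nlinarith [sq_nonneg (t*R), sq_nonneg u]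
  have hpos : 0 ≤ s - t*R + u := by linarith
  calc c = Real.sqrt (c^2) := (Real.sqrt_sq hc0).symm
    _ ≤ Real.sqrt ((s - t*R + u)^2) := Real.sqrt_le_sqrt hsq
    _ = s - t*R + u := Real.sqrt_sq hpos

private lemma auxFrac (s t ε : ℝ) (ht0 : 0 < t) (hts : 2*t ≤ s) (hss : s * s = t)
    (hsε : s ≤ ε/4) : t^2 / (2*(s-t)) ≤ (ε/4) * t := by
  have hs0 : 0 < s := by nlinarith
  have h1 : t^2 / (2*(s-t)) ≤ t^2 / s := by
    apply div_le_div_of_nonneg_left (by positivity) hs0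
    linarith
  have h2 : t^2 / s = s * t := by
    rw [eq_comm, eq_div_iff hs0.ne']
    nlinarith
  nlinarith [h1, h2]

set_option maxHeartbeats 1000000 in
theorem stmt_8 {X : Type*} [MetricSpace X] (q p x : X)
    (hqp : q ≠ p) (hqx : q ≠ x)
    (σ γ : ℝ → X) (hσ : IsGeodesic σ q p) (hγ : IsGeodesic γ q x)
    (α : ℝ)
    (hα : Tendsto
      (fun st : ℝ × ℝ =>
        modAngle (dist q (σ st.1)) (dist q (γ st.2)) (dist (σ st.1) (γ st.2)))
      ((𝓝[>] (0:ℝ)) ×ˢ (𝓝[>] (0:ℝ))) (𝓝 α)) :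
    ∃ E : ℝ → ℝ, Tendsto (fun t => E t / t) (𝓝[>] (0:ℝ)) (𝓝 0) ∧
      ∀ t ∈ Ioc (0:ℝ) (dist q x),
        dist p (γ t) ≤ dist q p - t * Real.cos α + E t := by
  have hdqp : 0 < dist q p := dist_pos.mpr hqp
  have hdqx : 0 < dist q x := dist_pos.mpr hqx
  refine ⟨fun t => max (dist p (γ t) - (dist q p - t * Real.cos α)) 0, ?_, ?_⟩
  · -- tendsto to 0
    rw [Metric.tendsto_nhds]
    intro ε hε
    have hcos : Tendsto
        (fun st : ℝ × ℝ => Real.cos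
          (modAngle (dist q (σ st.1)) (dist q (γ st.2)) (dist (σ st.1) (γ st.2))))
        ((𝓝[>] (0:ℝ)) ×ˢ (𝓝[>] (0:ℝ))) (𝓝 (Real.cos α)) :=
      (Real.continuous_cos.continuousAt.tendsto).comp hα
    have h1 := Metric.tendsto_nhds.mp hcos (ε/2) (by linarith)
    rw [eventually_prod_iff] at h1
    obtain ⟨pa, hpa, pb, hpb, hImp⟩ := h1
    obtain ⟨δa, hδa, hIa⟩ := mem_nhdsGT_iff_exists_Ioo_subset.mp hpa
    obtain ⟨δb, hδb, hIb⟩ := mem_nhdsGT_iff_exists_Ioo_subset.mp hpb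
    simp only [mem_Ioi] at hδa hδb
    set δ : ℝ := min (δa^2) (min δb (min (dist q p ^ 2) (min (dist q x)
        (min (1/4) ((ε/4)^2))))) with hδdef
    have hδpos : 0 < δ := by
      have := sq_nonneg δa
      positivity
    have hmem : Ioo (0:ℝ) δ ∈ 𝓝[>] (0:ℝ) := Ioo_mem_nhdsGT_of_mem ⟨le_refl 0, hδpos⟩
    filter_upwards [hmem] with t ht
    obtain ⟨ht0, htδ⟩ := ht
    have htδa : t < δa ^ 2 := lt_of_lt_of_le htδ (min_le_left _ _)
    have htδb : t < δb := lt_of_lt_of_le htδ ((min_le_right _ _).trans (min_le_left _ _))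
    have htdqp : t < dist q p ^ 2 := lt_of_lt_of_le htδ
      ((min_le_right _ _).trans ((min_le_right _ _).trans (min_le_left _ _)))
    have htdqx : t < dist q x := lt_of_lt_of_le htδ
      ((min_le_right _ _).trans ((min_le_right _ _).trans ((min_le_right _ _).trans
        (min_le_left _ _))))
    have ht14 : t < 1/4 := lt_of_lt_of_le htδ
      ((min_le_right _ _).trans ((min_le_right _ _).trans ((min_le_right _ _).trans
        ((min_le_right _ _).trans (min_le_left _ _)))))
    have htε : t < (ε/4)^2 := lt_of_lt_of_le htδ
      ((min_le_right _ _).trans ((min_le_right _ _).trans ((min_le_right _ _).trans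
        ((min_le_right _ _).trans (min_le_right _ _)))))
    set s : ℝ := Real.sqrt t with hsdef
    have hs0 : 0 < s := Real.sqrt_pos.mpr ht0
    have hss : s * s = t := Real.mul_self_sqrt ht0.le
    have hsδa : s < δa := (Real.sqrt_lt' hδa).mpr htδa
    have hsdqp : s ≤ dist q p := by
      rw [hsdef]
      have : t ≤ dist q p ^ 2 := htdqp.le
      calc Real.sqrt t ≤ Real.sqrt (dist q p ^ 2) := Real.sqrt_le_sqrt this
        _ = dist q p := Real.sqrt_sq hdqp.le
    have hs12 : s ≤ 1/2 := by
      rw [hsdef]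
      calc Real.sqrt t ≤ Real.sqrt (1/4) := Real.sqrt_le_sqrt ht14.le
        _ = 1/2 := by
          rw [show (1/4 : ℝ) = (1/2)^2 by norm_num, Real.sqrt_sq (by norm_num)]
    have hsε : s ≤ ε/4 := by
      rw [hsdef]
      calc Real.sqrt t ≤ Real.sqrt ((ε/4)^2) := Real.sqrt_le_sqrt htε.le
        _ = ε/4 := Real.sqrt_sq (by linarith)
    have hts : t < s := by
      have hs1 : s < 1 := by linarith
      calc t = s * s := hss.symm
        _ < s := mul_lt_of_lt_one_left hs0 hs1
    -- distance identities
    have hσ0 : σ 0 = q := hσ.1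
    have hγ0 : γ 0 = q := hγ.1
    have hσd : σ (dist q p) = p := hσ.2.1
    have hdqσ : dist q (σ s) = s := by
      have := hσ.2.2 0 ⟨le_refl 0, hdqp.le⟩ s ⟨hs0.le, hsdqp⟩
      rw [hσ0] at this
      rw [this, abs_of_nonpos (by linarith)]; ring
    have hdqγ : dist q (γ t) = t := by
      have := hγ.2.2 0 ⟨le_refl 0, hdqx.le⟩ t ⟨ht0.le, htdqx.le⟩
      rw [hγ0] at this
      rw [this, abs_of_nonpos (by linarith)]; ring
    have hdpσ : dist p (σ s) = dist q p - s := by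
      have := hσ.2.2 (dist q p) ⟨hdqp.le, le_refl _⟩ s ⟨hs0.le, hsdqp⟩
      rw [hσd] at this
      rw [this, abs_of_nonneg (by linarith)]
    set c : ℝ := dist (σ s) (γ t) with hcdef
    have hc0 : 0 ≤ c := dist_nonneg
    have hcle : c ≤ s + t := by
      calc c ≤ dist (σ s) q + dist q (γ t) := dist_triangle _ _ _
        _ = s + t := by rw [dist_comm, hdqσ, hdqγ]
    have hcge1 : t - s ≤ c := by
      have := dist_triangle q (σ s) (γ t)
      rw [hdqσ] at this; rw [← hdqγ]; linarith [hdqγ]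
    have hcge2 : s - t ≤ c := by
      have := dist_triangle q (γ t) (σ s)
      rw [hdqγ, dist_comm (γ t) (σ s)] at this
      linarith [hdqσ]
    -- cosine of the comparison angle
    obtain ⟨hRlb, hRub⟩ := auxBounds s t c hs0 ht0 hcge2 hcge1 hcle hc0
    have hcosR : Real.cos (modAngle s t c) = (s^2 + t^2 - c^2) / (2*s*t) := by
      rw [modAngle, Real.cos_arccos hRlb hRub]
    have hcθ : |Real.cos (modAngle s t c) - Real.cos α| < ε/2 := by
      have := hImp (hIa ⟨hs0, hsδa⟩) (hIb ⟨ht0, htδb⟩)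
      simp only [hdqσ, hdqγ, ← hcdef, Real.dist_eq] at this
      exact this
    have hcosa : Real.cos α - ε/2 ≤ Real.cos (modAngle s t c) := by
      have := abs_lt.mp hcθ
      linarith [this.1]
    set R : ℝ := Real.cos (modAngle s t c) with hRdef
    have hst2 : (2*s*t) ≠ 0 := by positivity
    have hRmul : R * (2*s*t) = s^2 + t^2 - c^2 := by
      rw [hcosR]; field_simp
    have hc2 : c^2 = s^2 + t^2 - 2*s*t*R := by linear_combination hRmul
    have hR1 : R ≤ 1 := Real.cos_le_one _
    have hkey : c ≤ s - t * R + t^2 / (2*(s-t)) :=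
      auxKey s t c R ht0 hts hR1 hc0 hc2
    have h2ts : 2 * t ≤ s := by
      calc 2 * t = (2 * s) * s := by rw [← hss]; ring
        _ ≤ 1 * s := mul_le_mul_of_nonneg_right (by linarith) hs0.le
        _ = s := one_mul s
    have hfrac : t^2 / (2*(s-t)) ≤ (ε/4) * t := auxFrac s t ε ht0 h2ts hss hsε
    -- final bound on dist p (γ t)
    have hmain : dist p (γ t) < dist q p - t * Real.cos α + ε * t := by
      have htri : dist p (γ t) ≤ dist p (σ s) + c := dist_triangle _ _ _
      have : dist p (γ t) ≤ dist q p - t * R + (ε/4) * t := by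
        rw [hdpσ] at htri
        linarith
      have hRa : - (t * R) ≤ - (t * Real.cos α) + (ε/2) * t := by
        have h1 : t * (Real.cos α - R) ≤ t * (ε/2) :=
          mul_le_mul_of_nonneg_left (by linarith) ht0.le
        have h2 : t * (Real.cos α - R) = t * Real.cos α - t * R := by ring
        have h3 : t * (ε/2) = (ε/2) * t := by ring
        linarith
      have hεt : 0 < ε * t := by positivity
      linarith
    -- conclude
    have hEt : max (dist p (γ t) - (dist q p - t * Real.cos α)) 0 < ε * t := by
      apply max_lt
      · linarith
      · positivity
    rw [Real.dist_eq, sub_zero, abs_of_nonneg (by positivity), div_lt_iff₀ ht0]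
    linarith [hEt]
  · intro t ht
    have h := le_max_left (dist p (γ t) - (dist q p - t * Real.cos α)) 0
    linarith [h]
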